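/- arXiv:1409.5527 — 8 statements merged into one kernel-verified Lean document; each statement's English description precedes it below -/
import Mathlib

section
/- Let a1, a2, a3, a4 be nonzero rational numbers such that a1*a2*a3*a4 is a perfect square (of a rational). If the equation a1*x1^2 + a2*x2^2 + a3*x3^2 + a4*x4^2 = 0 has a nontrivial rational solution, then the equation a1*y1^2 + a2*y2^2 + a3*y3^2 = 0 has a nontrivial rational solution. -/
theorem stmt_0 (a1 a2 a3 a4 k : ℚ) (ha1 : a1 ≠ 0) (ha2 : a2 ≠ 0)
    (ha3 : a3 ≠ 0) (ha4 : a4 ≠ 0) (hk : k ≠ 0) (hsq : a1*a2*a3*a4 = k^2)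
    (h : ∃ x1 x2 x3 x4 : ℚ, ¬(x1 = 0 ∧ x2 = 0 ∧ x3 = 0 ∧ x4 = 0) ∧
      a1*x1^2 + a2*x2^2 + a3*x3^2 + a4*x4^2 = 0) :
    ∃ y1 y2 y3 : ℚ, ¬(y1 = 0 ∧ y2 = 0 ∧ y3 = 0) ∧
      a1*y1^2 + a2*y2^2 + a3*y3^2 = 0 := by
  obtain ⟨x1, x2, x3, x4, hnt, heq⟩ := h
  by_cases h4 : x4 = 0
  · refine ⟨x1, x2, x3, ?_, ?_⟩
    · intro ⟨e1, e2, e3⟩; exact hnt ⟨e1, e2, e3, h4⟩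
    · subst h4; linear_combination heq
  · set d : ℚ := a1*x1^2 + a2*x2^2 with hdef
    by_cases hd : d = 0
    · have h34 : a3*x3^2 + a4*x4^2 = 0 := by linear_combination heq - hd
      have hx3 : x3 ≠ 0 := by
        intro h0
        apply ha4
        have : a4*x4^2 = 0 := by linear_combination h34 - a3 * (by rw [h0]; ring : x3^2 = (0:ℚ))
        exact (mul_eq_zero.1 this).resolve_right (pow_ne_zero 2 h4)
      by_cases h1 : x1 = 0
      · refine ⟨a2, k*x3/(a4*x4), 0, ?_, ?_⟩
        · intro ⟨e1, _, _⟩; exact ha2 e1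
        · have hx2 : x2 = 0 := by
            have : a2*x2^2 = 0 := by
              linear_combination hd - a1 * (by rw [h1]; ring : x1^2 = (0:ℚ))
            have := (mul_eq_zero.1 this).resolve_left ha2
            exact pow_eq_zero_iff (by norm_num : (2:ℕ) ≠ 0) |>.1 this
          field_simp
          linear_combination a1*a2^2*a4 * h34 - a2*x3^2 * hsq
      · have hx2 : x2 ≠ 0 := by
          intro h0
          apply ha1
          have : a1*x1^2 = 0 := by
            linear_combination hd - a2 * (by rw [h0]; ring : x2^2 = (0:ℚ))
          exact (mul_eq_zero.1 this).resolve_right (pow_ne_zero 2 h1)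
        refine ⟨x1, x2, 0, ?_, ?_⟩
        · intro ⟨e1, _, _⟩; exact h1 e1
        · linear_combination hd
    · refine ⟨a2*(a1*a3*x1*x3 - k*x2*x4), a1*(a2*a3*x2*x3 + k*x1*x4), a1*a2*d, ?_, ?_⟩
      · intro ⟨_, _, e3⟩
        exact hd ((mul_eq_zero.1 e3).resolve_left (mul_ne_zero ha1 ha2))
      · rw [hdef]
        linear_combination ((a1*a2)^2*a3*(a1*x1^2+a2*x2^2)) * heq +
          (-(a1*a2*(a1*x1^2+a2*x2^2)*x4^2)) * hsq
end

section
/- Let a1, a2, a3, a4 be nonzero rational numbers with a1*a2*a3*a4 = k^2 for some nonzero rational k, and suppose (α1, α2, α3, α4) is a nontrivial rational solution of a1*x1^2 + a2*x2^2 + a3*x3^2 + a4*x4^2 = 0. Define β1 = a2*(k*α2*α4 + a1*a3*α1*α3), β2 = a1*(k*α1*α4 - a2*a3*α2*α3), β3 = a1*a2*(a3*α3^2 + a4*α4^2). Then a1*β1^2 + a2*β2^2 + a3*β3^2 = 0. -/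
theorem stmt_2 (a1 a2 a3 a4 k α1 α2 α3 α4 : ℚ) (ha1 : a1 ≠ 0) (ha2 : a2 ≠ 0)
    (ha3 : a3 ≠ 0) (ha4 : a4 ≠ 0) (hk : k ≠ 0) (hsq : a1*a2*a3*a4 = k^2)
    (hnt : ¬(α1 = 0 ∧ α2 = 0 ∧ α3 = 0 ∧ α4 = 0))
    (hsol : a1*α1^2 + a2*α2^2 + a3*α3^2 + a4*α4^2 = 0) :
    a1*(a2*(k*α2*α4 + a1*a3*α1*α3))^2
      + a2*(a1*(k*α1*α4 - a2*a3*α2*α3))^2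
      + a3*(a1*a2*(a3*α3^2 + a4*α4^2))^2 = 0 := by
  linear_combination (a1^2*a2^2*a3*(a3*α3^2+a4*α4^2)) * hsol + (-a1*a2*α4^2*(a1*α1^2+a2*α2^2)) * hsq
end

section
/- Let a1, a2, a3, a4 be nonzero rational numbers with a1*a2*a3*a4 = k^2, k a nonzero rational, and let (β1, β2, β3) with β3 ≠ 0 be a rational solution of a1*y1^2 + a2*y2^2 + a3*y3^2 = 0. Then for all rational p, q, r, s, the tuple x1 = a4*(a1*β1*p + a2*β2*q)*r - a2*a4*(-β2*p + β1*q)*s, x2 = a1*a4*(-β2*p + β1*q)*r + a4*(a1*β1*p + a2*β2*q)*s, x3 = -a4*β3*(a1*p*r + a2*q*s), x4 = k*β3*(q*r - p*s) satisfies a1*x1^2 + a2*x2^2 + a3*x3^2 + a4*x4^2 = 0. -/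
theorem stmt_4 (a1 a2 a3 a4 k β1 β2 β3 : ℚ) (ha1 : a1 ≠ 0) (ha2 : a2 ≠ 0)
    (ha3 : a3 ≠ 0) (ha4 : a4 ≠ 0) (hk : k ≠ 0) (hsq : a1*a2*a3*a4 = k^2)
    (hβ3 : β3 ≠ 0) (hsol : a1*β1^2 + a2*β2^2 + a3*β3^2 = 0)
    (p q r s : ℚ) :
    a1*(a4*(a1*β1*p + a2*β2*q)*r - a2*a4*(-β2*p + β1*q)*s)^2
      + a2*(a1*a4*(-β2*p + β1*q)*r + a4*(a1*β1*p + a2*β2*q)*s)^2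
      + a3*(-a4*β3*(a1*p*r + a2*q*s))^2
      + a4*(k*β3*(q*r - p*s))^2 = 0 := by
  have h3 : a3*β3^2 = -(a1*β1^2 + a2*β2^2) := by linarith
  have hk2 : k^2 = a1*a2*a3*a4 := hsq.symm
  linear_combination (a4^2*(a1*p*r+a2*q*s)^2 + a1*a2*a4^2*(q*r-p*s)^2)*hsol - a4*β3^2*(q*r-p*s)^2*hsq
end

section
/- Let a1, a2, a3, a4 be nonzero rational numbers. Suppose the equation a1*x1^2 + a2*x2^2 + a3*x3^2 + a4*x4^2 = 0 admits a solution in linear forms in two independent parameters, i.e., there are rationals f1, f2, f3, f4 such that for all rationals u, v, the tuple (u, v, f1*u + f2*v, f3*u + f4*v) is a solution (and similarly for any permutation placing the free variables). Then a1*a2*a3*a4 is a perfect square of a rational. -/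
theorem stmt_6 (a1 a2 a3 a4 : ℚ) (ha1 : a1 ≠ 0) (ha2 : a2 ≠ 0)
    (ha3 : a3 ≠ 0) (ha4 : a4 ≠ 0)
    (f1 f2 f3 f4 : ℚ)
    (h : ∀ u v : ℚ, a1*u^2 + a2*v^2 + a3*(f1*u + f2*v)^2 + a4*(f3*u + f4*v)^2 = 0) :
    ∃ c : ℚ, a1*a2*a3*a4 = c^2 := by
  have e1 : a1 + a3*f1^2 + a4*f3^2 = 0 := by linear_combination h 1 0
  have e2 : a2 + a3*f2^2 + a4*f4^2 = 0 := by linear_combination h 0 1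
  have e3 : a3*f1*f2 + a4*f3*f4 = 0 := by linear_combination (h 1 1 - h 1 (-1)) / 4
  refine ⟨a3*a4*(f1*f4 - f2*f3), ?_⟩
  linear_combination (a3*a4*a2)*e1 - a3*a4*(a3*f1^2 + a4*f3^2)*e2 +
    a3*a4*(a3*f1*f2 + a4*f3*f4)*e3
end

section
/- The equation 390*p^4 - 229*p^2*q^2 + 12*q^4 = r^2 has no solution in integers p, q, r with (p, q) ≠ (0, 0). -/
private lemma key16 : ∀ a b c : ZMod 16, 390*a^4-229*a^2*b^2+12*b^4 = c^2 →
    (ZMod.castHom (by norm_num : (2:ℕ) ∣ 16) (ZMod 2) a = 0 ∧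
     ZMod.castHom (by norm_num : (2:ℕ) ∣ 16) (ZMod 2) b = 0) := by decide

private lemma descent : ∀ n : ℕ, ∀ p q r : ℤ, p.natAbs + q.natAbs ≤ n →
    390*p^4 - 229*p^2*q^2 + 12*q^4 = r^2 → p = 0 ∧ q = 0 := by
  intro n
  induction n using Nat.strong_induction_on with
  | _ n ih =>
    intro p q r hn h
    have h2p : (2:ℤ) ∣ p := by
      have := (key16 (p : ZMod 16) (q : ZMod 16) (r : ZMod 16) (by exact_mod_cast congrArg (fun z : ℤ => (z : ZMod 16)) h)).1
      rw [map_intCast] at this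
      exact (ZMod.intCast_zmod_eq_zero_iff_dvd p 2).mp this
    have h2q : (2:ℤ) ∣ q := by
      have := (key16 (p : ZMod 16) (q : ZMod 16) (r : ZMod 16) (by exact_mod_cast congrArg (fun z : ℤ => (z : ZMod 16)) h)).2
      rw [map_intCast] at this
      exact (ZMod.intCast_zmod_eq_zero_iff_dvd q 2).mp this
    obtain ⟨a, rfl⟩ := h2p
    obtain ⟨b, rfl⟩ := h2q
    have hr2 : r^2 = 16 * (390*a^4 - 229*a^2*b^2 + 12*b^4) := by linarith [h]
    have h2r : (2:ℤ) ∣ r := by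
      have : (2:ℤ) ∣ r^2 := ⟨8 * (390*a^4 - 229*a^2*b^2 + 12*b^4), by linarith⟩
      exact Int.prime_two.dvd_of_dvd_pow this
    obtain ⟨s, rfl⟩ := h2r
    have hs2 : s^2 = 4 * (390*a^4 - 229*a^2*b^2 + 12*b^4) := by nlinarith [hr2]
    have h2s : (2:ℤ) ∣ s := by
      have : (2:ℤ) ∣ s^2 := ⟨2 * (390*a^4 - 229*a^2*b^2 + 12*b^4), by linarith⟩
      exact Int.prime_two.dvd_of_dvd_pow this
    obtain ⟨t, rfl⟩ := h2s
    have ht : 390*a^4 - 229*a^2*b^2 + 12*b^4 = t^2 := by nlinarith [hs2]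
    rcases Nat.eq_zero_or_pos (a.natAbs + b.natAbs) with h0 | hpos
    · have ha : a = 0 := by omega
      have hb : b = 0 := by omega
      simp [ha, hb]
    · have hlt : a.natAbs + b.natAbs < n := by
        have h2a : (2*a).natAbs = 2 * a.natAbs := by
          simp [Int.natAbs_mul]
        have h2b : (2*b).natAbs = 2 * b.natAbs := by
          simp [Int.natAbs_mul]
        omega
      obtain ⟨ha, hb⟩ := ih _ hlt a b t le_rfl ht
      simp [ha, hb]

theorem stmt_13 :
    ¬ ∃ p q r : ℤ, (p, q) ≠ (0, 0) ∧ 390*p^4 - 229*p^2*q^2 + 12*q^4 = r^2 := by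
  rintro ⟨p, q, r, hne, h⟩
  obtain ⟨hp, hq⟩ := descent (p.natAbs + q.natAbs) p q r le_rfl h
  exact hne (by simp [hp, hq])
end

section
/- The simultaneous equations x1^2 - 2*x1*x2 - 9*x2^2 + 3*x3^2 - 4*x3*x4 + 11*x4^2 = 0 and 6*x1^2 - x1*x2 + x2^2 - 15*x3^2 - 2*x3*x4 - 11*x4^2 = 0 have no nontrivial integer solution. -/
lemma key9 : ∀ a b c d : ZMod 9,
    a^2 - 2*a*b - 9*b^2 + 3*c^2 - 4*c*d + 11*d^2 = 0 →
    6*a^2 - a*b + b^2 - 15*c^2 - 2*c*d - 11*d^2 = 0 →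
    (ZMod.castHom (by norm_num : (3:ℕ) ∣ 9) (ZMod 3)) a = 0 ∧
    (ZMod.castHom (by norm_num : (3:ℕ) ∣ 9) (ZMod 3)) b = 0 ∧
    (ZMod.castHom (by norm_num : (3:ℕ) ∣ 9) (ZMod 3)) c = 0 ∧
    (ZMod.castHom (by norm_num : (3:ℕ) ∣ 9) (ZMod 3)) d = 0 := by decide

lemma div3 (x1 x2 x3 x4 : ℤ)
    (h1 : x1^2 - 2*x1*x2 - 9*x2^2 + 3*x3^2 - 4*x3*x4 + 11*x4^2 = 0)
    (h2 : 6*x1^2 - x1*x2 + x2^2 - 15*x3^2 - 2*x3*x4 - 11*x4^2 = 0) :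
    (3:ℤ) ∣ x1 ∧ (3:ℤ) ∣ x2 ∧ (3:ℤ) ∣ x3 ∧ (3:ℤ) ∣ x4 := by
  have c1 : ((x1:ZMod 9))^2 - 2*x1*x2 - 9*(x2:ZMod 9)^2 + 3*(x3:ZMod 9)^2 - 4*x3*x4 + 11*(x4:ZMod 9)^2 = 0 := by
    have := congrArg (Int.cast : ℤ → ZMod 9) h1
    push_cast at this
    convert this using 1 <;> push_cast <;> ring
  have c2 : 6*((x1:ZMod 9))^2 - x1*x2 + (x2:ZMod 9)^2 - 15*(x3:ZMod 9)^2 - 2*x3*x4 - 11*(x4:ZMod 9)^2 = 0 := by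
    have := congrArg (Int.cast : ℤ → ZMod 9) h2
    push_cast at this
    convert this using 1 <;> push_cast <;> ring
  have k := key9 (x1:ZMod 9) x2 x3 x4 (by push_cast; convert c1 using 1 <;> push_cast <;> ring)
    (by push_cast; convert c2 using 1 <;> push_cast <;> ring)
  have e : ∀ x : ℤ, (ZMod.castHom (by norm_num : (3:ℕ) ∣ 9) (ZMod 3)) ((x:ZMod 9)) = (x : ZMod 3) :=
    fun x => map_intCast _ x
  rw [e, e, e, e] at k
  refine ⟨?_, ?_, ?_, ?_⟩ <;>
    [ exact (ZMod.intCast_zmod_eq_zero_iff_dvd x1 3).mp k.1;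
      exact (ZMod.intCast_zmod_eq_zero_iff_dvd x2 3).mp k.2.1;
      exact (ZMod.intCast_zmod_eq_zero_iff_dvd x3 3).mp k.2.2.1;
      exact (ZMod.intCast_zmod_eq_zero_iff_dvd x4 3).mp k.2.2.2 ]

lemma descent_s14 : ∀ n : ℕ, ∀ x1 x2 x3 x4 : ℤ,
    x1.natAbs + x2.natAbs + x3.natAbs + x4.natAbs = n →
    x1^2 - 2*x1*x2 - 9*x2^2 + 3*x3^2 - 4*x3*x4 + 11*x4^2 = 0 →
    6*x1^2 - x1*x2 + x2^2 - 15*x3^2 - 2*x3*x4 - 11*x4^2 = 0 →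
    x1 = 0 ∧ x2 = 0 ∧ x3 = 0 ∧ x4 = 0 := by
  intro n
  induction n using Nat.strong_induction_on with
  | _ n ih =>
    intro x1 x2 x3 x4 hn h1 h2
    obtain ⟨⟨y1, e1⟩, ⟨y2, e2⟩, ⟨y3, e3⟩, ⟨y4, e4⟩⟩ := div3 x1 x2 x3 x4 h1 h2
    rcases Nat.eq_zero_or_pos n with h0 | hpos
    · rw [h0] at hn
      refine ⟨?_, ?_, ?_, ?_⟩ <;> rw [← Int.natAbs_eq_zero] <;> omega
    · subst e1 e2 e3 e4
      have h1' : y1^2 - 2*y1*y2 - 9*y2^2 + 3*y3^2 - 4*y3*y4 + 11*y4^2 = 0 := by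
        have : (9:ℤ) * (y1^2 - 2*y1*y2 - 9*y2^2 + 3*y3^2 - 4*y3*y4 + 11*y4^2) = 0 := by
          linear_combination h1
        linarith [this]
      have h2' : 6*y1^2 - y1*y2 + y2^2 - 15*y3^2 - 2*y3*y4 - 11*y4^2 = 0 := by
        have : (9:ℤ) * (6*y1^2 - y1*y2 + y2^2 - 15*y3^2 - 2*y3*y4 - 11*y4^2) = 0 := by
          linear_combination h2
        linarith [this]
      have hlt : y1.natAbs + y2.natAbs + y3.natAbs + y4.natAbs < n := by
        have a1 : (3*y1).natAbs = 3 * y1.natAbs := by simp [Int.natAbs_mul]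
        have a2 : (3*y2).natAbs = 3 * y2.natAbs := by simp [Int.natAbs_mul]
        have a3 : (3*y3).natAbs = 3 * y3.natAbs := by simp [Int.natAbs_mul]
        have a4 : (3*y4).natAbs = 3 * y4.natAbs := by simp [Int.natAbs_mul]
        omega
      have := ih _ hlt y1 y2 y3 y4 rfl h1' h2'
      obtain ⟨z1, z2, z3, z4⟩ := this
      subst z1 z2 z3 z4
      norm_num

theorem stmt_14 :
    ¬ ∃ x1 x2 x3 x4 : ℤ, ¬(x1 = 0 ∧ x2 = 0 ∧ x3 = 0 ∧ x4 = 0) ∧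
      x1^2 - 2*x1*x2 - 9*x2^2 + 3*x3^2 - 4*x3*x4 + 11*x4^2 = 0 ∧
      6*x1^2 - x1*x2 + x2^2 - 15*x3^2 - 2*x3*x4 - 11*x4^2 = 0 := by
  rintro ⟨x1, x2, x3, x4, hne, h1, h2⟩
  exact hne (descent_s14 _ x1 x2 x3 x4 rfl h1 h2)
end

section
/- Let a1, a2, a3, a4 be rationals and suppose (t1, y1) and (t2, y2) are rational solutions of y^2 = t^4 + a1*t^3 + a2*t^2 + a3*t + a4 with t1 ≠ t2 and 2*y1 - 2*y2 + a1*(t1 - t2) + 2*t1^2 - 2*t2^2 ≠ 0. Define t12 = (-2*y1*y2 + 2*(t1 - t2)*(t2*y1 - t1*y2) + a1*(t1 + t2)*t1*t2 + 2*a2*t1*t2 + a3*(t1 + t2) + 2*a4 + 2*(t1^2 - t1*t2 + t2^2)*t1*t2) / ((t1 - t2)*(2*y1 - 2*y2 + a1*(t1 - t2) + 2*t1^2 - 2*t2^2)). Then t12^4 + a1*t12^3 + a2*t12^2 + a3*t12 + a4 is a square of a rational. -/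
theorem stmt_15 (a1 a2 a3 a4 t1 y1 t2 y2 : ℚ)
    (h1 : y1^2 = t1^4 + a1*t1^3 + a2*t1^2 + a3*t1 + a4)
    (h2 : y2^2 = t2^4 + a1*t2^3 + a2*t2^2 + a3*t2 + a4)
    (hne : t1 ≠ t2)
    (hd : 2*y1 - 2*y2 + a1*(t1 - t2) + 2*t1^2 - 2*t2^2 ≠ 0) :
    let t12 := (-2*y1*y2 + 2*(t1 - t2)*(t2*y1 - t1*y2) + a1*(t1 + t2)*t1*t2
        + 2*a2*t1*t2 + a3*(t1 + t2) + 2*a4 + 2*(t1^2 - t1*t2 + t2^2)*t1*t2)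
      / ((t1 - t2)*(2*y1 - 2*y2 + a1*(t1 - t2) + 2*t1^2 - 2*t2^2))
    ∃ r : ℚ, t12^4 + a1*t12^3 + a2*t12^2 + a3*t12 + a4 = r^2 := by
  intro t12
  have hw : t1 - t2 ≠ 0 := sub_ne_zero.mpr hne
  have hden : (t1 - t2)*(2*y1 - 2*y2 + a1*(t1 - t2) + 2*t1^2 - 2*t2^2) ≠ 0 := mul_ne_zero hw hd
  obtain ⟨c, hc⟩ : ∃ c : ℚ, c*(t1 - t2) = -y1 + y2 - (t1^2 - t2^2) :=
    ⟨(-y1 + y2 - (t1^2 - t2^2))/(t1 - t2), div_mul_cancel₀ _ hw⟩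
  obtain ⟨d, hd2⟩ : ∃ d : ℚ, d = -y1 - t1^2 - c*t1 := ⟨_, rfl⟩
  obtain ⟨k, hk⟩ : ∃ k : ℚ, k = a1 - 2*c := ⟨_, rfl⟩
  have hku : k*(t1 - t2) = (2*y1 - 2*y2 + a1*(t1 - t2) + 2*t1^2 - 2*t2^2) := by linear_combination (t1 - t2)*hk + (-2)*hc
  have hkne : k ≠ 0 := by
    intro h
    apply hd
    rw [h, zero_mul] at hku
    exact hku.symm
  obtain ⟨t3, ht3⟩ : ∃ t3 : ℚ, k*t3 = -(a2 - c^2 - 2*d) - k*(t1 + t2) :=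
    ⟨(-(a2 - c^2 - 2*d) - k*(t1 + t2))/k, mul_div_cancel₀ _ hkne⟩
  obtain ⟨A, hA⟩ : ∃ A : ℚ, A = a3 - 2*c*d - k*(t1*t2 + t1*t3 + t2*t3) := ⟨_, rfl⟩
  obtain ⟨Bq, hB⟩ : ∃ Bq : ℚ, Bq = a4 - d^2 + k*(t1*t2*t3) := ⟨_, rfl⟩
  have hI : ∀ t : ℚ, t^4 + a1*t^3 + a2*t^2 + a3*t + a4 - (t^2 + c*t + d)^2
      = k*(t - t1)*(t - t2)*(t - t3) + A*t + Bq := by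
    intro t
    linear_combination (-(t^3))*hk + t^2*ht3 + (-t)*hA + (-1)*hB
  have s1 : t1^2 + c*t1 + d = -y1 := by linear_combination hd2
  have s2 : t2^2 + c*t2 + d = -y2 := by linear_combination hd2 - hc
  have h01 : A*t1 + Bq = 0 := by
    linear_combination (-1)*(hI t1) + (-1)*h1 + (y1 - (t1^2 + c*t1 + d))*s1
  have h02 : A*t2 + Bq = 0 := by
    linear_combination (-1)*(hI t2) + (-1)*h2 + (y2 - (t2^2 + c*t2 + d))*s2
  have hα : A = 0 := by
    have h3 : A*(t1 - t2) = 0 := by linear_combination h01 - h02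
    exact (mul_eq_zero.mp h3).resolve_right hw
  have hβ : Bq = 0 := by linear_combination h01 - t1*hα
  have hE : (-2*y1*y2 + 2*(t1 - t2)*(t2*y1 - t1*y2) + a1*(t1 + t2)*t1*t2 + 2*a2*t1*t2 + a3*(t1 + t2) + 2*a4 + 2*(t1^2 - t1*t2 + t2^2)*t1*t2) = (-(a2 - c^2 - 2*d) - k*(t1 + t2))*(t1 - t2)^2 := by
    linear_combination ((-1)*y2 + (1)*y1 + (1)*t2*c + (1)*t2^2 + (-1)*t1*c + (-2)*t1*t2 + (1)*t1^2)*hc + ((-2)*t2^2 + (4)*t1*t2 + (-2)*t1^2)*hd2 + ((1)*t2^3 + (-1)*t1*t2^2 + (-1)*t1^2*t2 + (1)*t1^3)*hk + ((-1))*h1 + ((-1))*h2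
  have hq : t12 * ((t1 - t2)*(2*y1 - 2*y2 + a1*(t1 - t2) + 2*t1^2 - 2*t2^2)) = (-2*y1*y2 + 2*(t1 - t2)*(t2*y1 - t1*y2) + a1*(t1 + t2)*t1*t2 + 2*a2*t1*t2 + a3*(t1 + t2) + 2*a4 + 2*(t1^2 - t1*t2 + t2^2)*t1*t2) := by
    rw [show t12 = (-2*y1*y2 + 2*(t1 - t2)*(t2*y1 - t1*y2) + a1*(t1 + t2)*t1*t2 + 2*a2*t1*t2 + a3*(t1 + t2) + 2*a4 + 2*(t1^2 - t1*t2 + t2^2)*t1*t2) / ((t1 - t2)*(2*y1 - 2*y2 + a1*(t1 - t2) + 2*t1^2 - 2*t2^2)) from rfl]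
    exact div_mul_cancel₀ _ hden
  have ht12 : t12 = t3 := by
    have hkw : k*(t1 - t2)^2 ≠ 0 := mul_ne_zero hkne (pow_ne_zero 2 hw)
    have h : t12*(k*(t1 - t2)^2) = t3*(k*(t1 - t2)^2) := by
      linear_combination (t12*(t1 - t2))*hku + hq + (-(t1 - t2)^2)*ht3 + hE
    exact mul_right_cancel₀ hkw h
  rw [ht12]
  refine ⟨t3^2 + c*t3 + d, ?_⟩
  linear_combination hI t3 + t3*hα + hβ
end

section
/- Let a1, a2, a3, a4 be rationals and suppose (t1, y1) is a rational solution of y^2 = t^4 + a1*t^3 + a2*t^2 + a3*t + a4 with y1 ≠ 0 and (4*t1 + a1)*y1 + 4*t1^3 + 3*a1*t1^2 + 2*a2*t1 + a3 ≠ 0. Define t11 = (-4*(2*t1^2 + 2*a1*t1 + a2)*y1^2 + 4*(2*t1^4 + a1*t1^3 - a3*t1 - 2*a4)*y1 + (4*t1^3 + 3*a1*t1^2 + 2*a2*t1 + a3)^2) / (4*y1*((4*t1 + a1)*y1 + 4*t1^3 + 3*a1*t1^2 + 2*a2*t1 + a3)). Then t11^4 + a1*t11^3 + a2*t11^2 +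 a3*t11 + a4 is a square of a rational. -/
set_option maxHeartbeats 1000000 in
theorem stmt_16 (a1 a2 a3 a4 t1 y1 : ℚ)
    (h1 : y1^2 = t1^4 + a1*t1^3 + a2*t1^2 + a3*t1 + a4)
    (hy : y1 ≠ 0)
    (hd : (4*t1 + a1)*y1 + 4*t1^3 + 3*a1*t1^2 + 2*a2*t1 + a3 ≠ 0) :
    let t11 := (-4*(2*t1^2 + 2*a1*t1 + a2)*y1^2 + 4*(2*t1^4 + a1*t1^3 - a3*t1 - 2*a4)*y1
        + (4*t1^3 + 3*a1*t1^2 + 2*a2*t1 + a3)^2)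
      / (4*y1*((4*t1 + a1)*y1 + 4*t1^3 + 3*a1*t1^2 + 2*a2*t1 + a3))
    ∃ r : ℚ, t11^4 + a1*t11^3 + a2*t11^2 + a3*t11 + a4 = r^2 := by
  intro t11
  have ht : t11 = (-4*(2*t1^2 + 2*a1*t1 + a2)*y1^2 + 4*(2*t1^4 + a1*t1^3 - a3*t1 - 2*a4)*y1
        + (4*t1^3 + 3*a1*t1^2 + 2*a2*t1 + a3)^2)
      / (4*y1*((4*t1 + a1)*y1 + 4*t1^3 + 3*a1*t1^2 + 2*a2*t1 + a3)) := rfl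
  clear_value t11
  obtain ⟨B, hB⟩ : ∃ B : ℚ, B = -(4*t1^3+3*a1*t1^2+2*a2*t1+a3) - 4*t1*y1 := ⟨_, rfl⟩
  obtain ⟨C, hC⟩ : ∃ C : ℚ, C = 2*y1*(-y1 - t1^2) - B*t1 := ⟨_, rfl⟩
  obtain ⟨N, hN⟩ : ∃ N : ℚ, N = -4*(2*t1^2 + 2*a1*t1 + a2)*y1^2
      + 4*(2*t1^4 + a1*t1^3 - a3*t1 - 2*a4)*y1
      + (4*t1^3 + 3*a1*t1^2 + 2*a2*t1 + a3)^2 := ⟨_, rfl⟩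
  obtain ⟨D, hD⟩ : ∃ D : ℚ,
      D = 4*y1*((4*t1 + a1)*y1 + 4*t1^3 + 3*a1*t1^2 + 2*a2*t1 + a3) := ⟨_, rfl⟩
  have hD0 : D ≠ 0 := by
    rw [hD]
    exact mul_ne_zero (by simp [hy]) hd
  have hDt : D * t11 = N := by
    have hne : 4*y1*((4*t1 + a1)*y1 + 4*t1^3 + 3*a1*t1^2 + 2*a2*t1 + a3) ≠ 0 :=
      mul_ne_zero (by simp [hy]) hd
    rw [hD, hN, ht, mul_div_assoc', mul_div_cancel_left₀ _ hne]
  have key : ∀ t : ℚ, (4*y1^2*(t^4 + a1*t^3 + a2*t^2 + a3*t + a4)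
        - (2*y1*t^2 + B*t + C)^2) * D
      = (2*y1*a1 - 2*B)*(t - t1)^2*(D*t - N)*(2*y1) := by
    intro t
    rw [hC, hB, hN, hD]
    linear_combination (128*t1*y1^3*t^2 - 64*t1*y1^4 - 256*t1^2*y1^3*t + 128*t1^3*y1^2*t^2 + 64*t1^3*y1^3 - 256*t1^4*y1^2*t + 128*t1^5*y1^2 + 32*a3*y1^2*t^2 - 16*a3*y1^3 - 64*a3*t1*y1^2*t + 32*a3*t1^2*y1^2 + 64*a2*t1*y1^2*t^2 - 32*a2*t1*y1^3 - 128*a2*t1^2*y1^2*t + 64*a2*t1^3*y1^2 + 32*a1*y1^3*t^2 - 16*a1*y1^4 - 64*a1*t1*y1^3*t + 96*a1*t1^2*y1^2*t^2 - 16*a1*t1^2*y1^3 - 192*a1*t1^3*y1^2*t + 96*a1*t1^4*y1^2) * h1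
  have k2 := key t11
  rw [hDt, sub_self, mul_zero, zero_mul, mul_eq_zero] at k2
  rcases k2 with k2 | k2
  · refine ⟨(2*y1*t11^2 + B*t11 + C)/(2*y1), ?_⟩
    have h2 : 4*y1^2*(t11^4 + a1*t11^3 + a2*t11^2 + a3*t11 + a4)
        = (2*y1*t11^2 + B*t11 + C)^2 := by linear_combination k2
    field_simp
    linear_combination h2
  · exact absurd k2 hD0
end
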